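/- If S and T are positive semidefinite real symmetric bilinear forms on a finite-dimensional real inner product space V, each written as a sum of rank-one forms, then for any complex 2-vector φ = Σ φ^{ij} e_i ∧ e_j (with φ^{ij} antisymmetric complex coefficients), the Kulkarni–Nomizu product satisfies (S ⊼ T)(φ, φ̄) = 4 Σ_{i,j,k,l} φ^{ij} conj(φ^{kl}) S_{ik} T_{jl} ≥ 0. -/

import Mathlib

open Finset
open scoped ComplexConjugate RealInnerProductSpace ComplexOrder Kronecker

/-!
The Gram matrices `(S (e i) (e k))` and `(T (e j) (e l))` are of the form `Aᴴ * A`, hence positive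
semidefinite, and so is their Kronecker product; the sum in question is the quadratic form of that
Kronecker product evaluated at the vector `(i, j) ↦ conj (φ i j)`.
-/

namespace Matrix

theorem posSemidef_of_eq_sum_inner_mul_inner {V ι α : Type*} [NormedAddCommGroup V]
    [InnerProductSpace ℝ V] [Finite ι] [Fintype α] (S : V → V → ℝ) (v : α → V)
    (hS : ∀ x y, S x y = ∑ a, ⟪v a, x⟫ * ⟪v a, y⟫) (e : ι → V) :
    (Matrix.of fun i k ↦ (S (e i) (e k) : ℂ)).PosSemidef := by
  convert posSemidef_conjTranspose_mul_self (Matrix.of fun a i ↦ (⟪v a, e i⟫ : ℂ)) using 1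
  ext i k
  simp [mul_apply, hS]

theorem PosSemidef.sum_mul_conj_mul_mul_nonneg {ι κ : Type*} [Fintype ι] [Fintype κ]
    {A : Matrix ι ι ℂ} {B : Matrix κ κ ℂ} (hA : A.PosSemidef) (hB : B.PosSemidef)
    (φ : ι → κ → ℂ) :
    0 ≤ ∑ i, ∑ j, ∑ k, ∑ l, φ i j * conj (φ k l) * A i k * B j l := by
  have h := (hA.kronecker hB).dotProduct_mulVec_nonneg (fun p ↦ conj (φ p.1 p.2))
  simp only [dotProduct, mulVec, kroneckerMap_apply, Pi.star_apply, Complex.star_def,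
    Complex.conj_conj, Fintype.sum_prod_type, mul_sum] at h
  refine h.trans_eq (sum_congr rfl fun i _ ↦ sum_congr rfl fun j _ ↦
    sum_congr rfl fun k _ ↦ sum_congr rfl fun l _ ↦ by ring)

end Matrix

theorem kulkarni_nomizu_nonneg_general
    {V : Type*} [NormedAddCommGroup V] [InnerProductSpace ℝ V]
    {n m m' : ℕ} (e : Fin n → V)
    (S T : V → V → ℝ) (v : Fin m → V) (w : Fin m' → V)
    (hS : ∀ x y, S x y = ∑ a, ⟪v a, x⟫ * ⟪v a, y⟫)
    (hT : ∀ x y, T x y = ∑ b, ⟪w b, x⟫ * ⟪w b, y⟫)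
    (φ : Fin n → Fin n → ℂ) :
    0 ≤ 4 * ∑ i, ∑ j, ∑ k, ∑ l,
        φ i j * conj (φ k l) * ((S (e i) (e k) : ℝ) : ℂ) * ((T (e j) (e l) : ℝ) : ℂ) :=
  mul_nonneg (by norm_num) <|
    (Matrix.posSemidef_of_eq_sum_inner_mul_inner S v hS e).sum_mul_conj_mul_mul_nonneg
      (Matrix.posSemidef_of_eq_sum_inner_mul_inner T w hT e) φ

/-- If `S` and `T` are positive semidefinite real symmetric bilinear forms on a
finite-dimensional real inner product space `V` (each written as a sum of rank-one forms),
then for any complex 2-vector with antisymmetric coefficients `φ`, the Kulkarni–Nomizu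
product `(S ⊼ T)(φ, φ̄) = 4 ∑ φ^{ij} conj(φ^{kl}) S_{ik} T_{jl}` is nonnegative. -/
theorem kulkarni_nomizu_nonneg
    {V : Type*} [NormedAddCommGroup V] [InnerProductSpace ℝ V] [FiniteDimensional ℝ V]
    {n m m' : ℕ} (e : Fin n → V) (he : Orthonormal ℝ e)
    (S T : V → V → ℝ) (v : Fin m → V) (w : Fin m' → V)
    (hSsymm : ∀ x y, S x y = S y x) (hTsymm : ∀ x y, T x y = T y x)
    (hS : ∀ x y, S x y = ∑ a, ⟪v a, x⟫ * ⟪v a, y⟫)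
    (hT : ∀ x y, T x y = ∑ b, ⟪w b, x⟫ * ⟪w b, y⟫)
    (φ : Fin n → Fin n → ℂ) (hφ : ∀ i j, φ i j = -φ j i) :
    0 ≤ 4 * ∑ i, ∑ j, ∑ k, ∑ l,
        φ i j * conj (φ k l) * ((S (e i) (e k) : ℝ) : ℂ) * ((T (e j) (e l) : ℝ) : ℂ) :=
  kulkarni_nomizu_nonneg_general e S T v w hS hT φ
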